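/- The comultiplication Δ(v_I) = Σ_{J ⊔ K = I} (-1)^{π(J,K)} q^{|J|·|K|} v_J ⊗ v_K on the free module with basis {v_I : I ⊆ {1,...,n}} is coassociative: (Δ ⊗ id) ∘ Δ = (id ⊗ Δ) ∘ Δ. -/
import Mathlib


open Finsupp TensorProduct LaurentPolynomial

abbrev R := LaurentPolynomial ℤ

noncomputable def q : R := LaurentPolynomial.T 1

/-- `π(J, K) = |{(j, k) ∈ J × K : j > k}|`. -/
def crossingPi {n : ℕ} (J K : Finset (Fin n)) : ℕ :=
  ((J ×ˢ K).filter (fun p => p.2 < p.1)).card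

/-- The free `R`-module with basis `{v_I : I ⊆ {1,...,n}}`. -/
abbrev WedgeV (n : ℕ) := Finset (Fin n) →₀ R

/-- The comultiplication
`Δ(v_I) = Σ_{J ⊔ K = I} (-1)^{π(J,K)} q^{|J|·|K|} v_J ⊗ v_K`, summed over ordered pairs
`(J, K)` of disjoint subsets with `J ∪ K = I`. -/
noncomputable def Δ (n : ℕ) : WedgeV n →ₗ[R] WedgeV n ⊗[R] WedgeV n :=
  Finsupp.lift (WedgeV n ⊗[R] WedgeV n) R (Finset (Fin n)) fun I =>
    ∑ J ∈ I.powerset,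
      ((-1 : R) ^ crossingPi J (I \ J) * q ^ (J.card * (I \ J).card)) •
        (Finsupp.single J (1 : R) ⊗ₜ[R] Finsupp.single (I \ J) (1 : R))

lemma crossingPi_union_left {n : ℕ} {A B : Finset (Fin n)} (C : Finset (Fin n))
    (h : Disjoint A B) : crossingPi (A ∪ B) C = crossingPi A C + crossingPi B C := by
  unfold crossingPi
  rw [Finset.union_product, Finset.filter_union, Finset.card_union_of_disjoint]
  exact Finset.disjoint_filter_filter (Finset.disjoint_product.mpr (Or.inl h))

lemma crossingPi_union_right {n : ℕ} (A : Finset (Fin n)) {B C : Finset (Fin n)}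
    (h : Disjoint B C) : crossingPi A (B ∪ C) = crossingPi A B + crossingPi A C := by
  unfold crossingPi
  rw [Finset.product_union, Finset.filter_union, Finset.card_union_of_disjoint]
  exact Finset.disjoint_filter_filter (Finset.disjoint_product.mpr (Or.inr h))

lemma Δ_single {n : ℕ} (I : Finset (Fin n)) :
    Δ n (Finsupp.single I 1) = ∑ J ∈ I.powerset,
      ((-1 : R) ^ crossingPi J (I \ J) * q ^ (J.card * (I \ J).card)) •
        (Finsupp.single J (1 : R) ⊗ₜ[R] Finsupp.single (I \ J) (1 : R)) := by
  simp [Δ, Finsupp.lift_apply, Finsupp.sum_single_index]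

/-- The comultiplication `Δ` is coassociative: `(Δ ⊗ id) ∘ Δ = (id ⊗ Δ) ∘ Δ`. -/
theorem Δ_coassoc (n : ℕ) :
    (TensorProduct.assoc R (WedgeV n) (WedgeV n) (WedgeV n)).toLinearMap ∘ₗ
        TensorProduct.map (Δ n) LinearMap.id ∘ₗ Δ n =
      TensorProduct.map LinearMap.id (Δ n) ∘ₗ Δ n := by
  refine Finsupp.lhom_ext' fun I => LinearMap.ext_ring ?_
  simp only [LinearMap.comp_apply, Finsupp.lsingle_apply, Δ_single, map_sum,
    LinearMap.map_smul, TensorProduct.map_tmul, LinearMap.id_apply, Δ_single,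
    TensorProduct.sum_tmul, TensorProduct.tmul_sum, TensorProduct.smul_tmul',
    TensorProduct.tmul_smul, LinearEquiv.coe_coe, TensorProduct.assoc_tmul,
    Finset.smul_sum, smul_smul]
  simp only [← TensorProduct.smul_tmul', TensorProduct.tmul_smul, smul_smul]
  rw [Finset.sum_sigma', Finset.sum_sigma']
  refine Finset.sum_nbij' (fun p => ⟨p.2, p.1 \ p.2⟩) (fun p => ⟨p.1 ∪ p.2, p.1⟩)
    ?_ ?_ ?_ ?_ ?_
  · rintro ⟨J, A⟩ hp
    simp only [Finset.mem_sigma, Finset.mem_powerset] at hp ⊢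
    exact ⟨hp.2.trans hp.1, fun x hx => by
      simp only [Finset.mem_sdiff] at hx ⊢; exact ⟨hp.1 hx.1, hx.2⟩⟩
  · rintro ⟨A, B⟩ hp
    simp only [Finset.mem_sigma, Finset.mem_powerset] at hp ⊢
    constructor
    · exact Finset.union_subset hp.1 (hp.2.trans (Finset.sdiff_subset))
    · exact Finset.subset_union_left
  · rintro ⟨J, A⟩ hp
    simp only [Finset.mem_sigma, Finset.mem_powerset] at hp
    simp [Finset.union_sdiff_of_subset hp.2]
  · rintro ⟨A, B⟩ hp
    simp only [Finset.mem_sigma, Finset.mem_powerset] at hp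
    have hd : Disjoint A B := Finset.disjoint_of_subset_right hp.2 Finset.sdiff_disjoint.symm
    simp [Finset.union_sdiff_cancel_left hd]
  · rintro ⟨J, A⟩ hp
    simp only [Finset.mem_sigma, Finset.mem_powerset] at hp
    obtain ⟨hJI, hAJ⟩ := hp
    have hC : (I \ A) \ (J \ A) = I \ J := by
      ext x; simp only [Finset.mem_sdiff, not_and, not_not]
      constructor
      · rintro ⟨⟨hxI, hxA⟩, h2⟩
        exact ⟨hxI, fun hxJ => hxA (h2 hxJ)⟩
      · rintro ⟨hxI, hxJ⟩
        exact ⟨⟨hxI, fun hxA => hxJ (hAJ hxA)⟩, fun hxJ' => absurd hxJ' hxJ⟩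
    have hIA : I \ A = (J \ A) ∪ (I \ J) := by
      ext x; simp only [Finset.mem_sdiff, Finset.mem_union]
      constructor
      · rintro ⟨hxI, hxA⟩
        by_cases hxJ : x ∈ J
        · exact Or.inl ⟨hxJ, hxA⟩
        · exact Or.inr ⟨hxI, hxJ⟩
      · rintro (⟨hxJ, hxA⟩ | ⟨hxI, hxJ⟩)
        · exact ⟨hJI hxJ, hxA⟩
        · exact ⟨hxI, fun hxA => hxJ (hAJ hxA)⟩
    have hdAB : Disjoint A (J \ A) := Finset.sdiff_disjoint.symm
    have hdBC : Disjoint (J \ A) (I \ J) :=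
      Finset.disjoint_of_subset_left Finset.sdiff_subset Finset.sdiff_disjoint.symm
    have hJ : J = A ∪ (J \ A) := (Finset.union_sdiff_of_subset hAJ).symm
    have hcardJ : J.card = A.card + (J \ A).card := by
      conv_lhs => rw [hJ]
      exact Finset.card_union_of_disjoint hdAB
    have hcardIA : (I \ A).card = (J \ A).card + (I \ J).card := by
      rw [hIA]; exact Finset.card_union_of_disjoint hdBC
    have h1 : ∀ C : Finset (Fin n), crossingPi J C = crossingPi A C + crossingPi (J \ A) C := by
      intro C
      conv_lhs => rw [hJ]
      exact crossingPi_union_left _ hdAB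
    have h2 : crossingPi A (I \ A) = crossingPi A (J \ A) + crossingPi A (I \ J) := by
      rw [hIA]; exact crossingPi_union_right _ hdBC
    have hpi : crossingPi J (I \ J) + crossingPi A (J \ A)
        = crossingPi A (I \ A) + crossingPi (J \ A) (I \ J) := by
      rw [h1, h2]; ring
    have he : J.card * (I \ J).card + A.card * (J \ A).card
        = A.card * (I \ A).card + (J \ A).card * ((I \ A) \ (J \ A)).card := by
      rw [hC, hcardJ, hcardIA]; ring
    dsimp only
    rw [hC]
    congr 1
    have hpi' : crossingPi A (I \ J) + crossingPi (J \ A) (I \ J) + crossingPi A (J \ A)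
        = crossingPi A (I \ A) + crossingPi (J \ A) (I \ J) := by
      rw [h2]; ring
    have he' : J.card * (I \ J).card + A.card * (J \ A).card
        = A.card * (I \ A).card + (J \ A).card * (I \ J).card := by
      rw [hcardJ, hcardIA]; ring
    calc (-1:R) ^ crossingPi J (I \ J) * q ^ (J.card * (I \ J).card) *
          ((-1) ^ crossingPi A (J \ A) * q ^ (A.card * (J \ A).card))
        = (-1:R) ^ (crossingPi A (I \ J) + crossingPi (J \ A) (I \ J) + crossingPi A (J \ A)) *
          q ^ (J.card * (I \ J).card + A.card * (J \ A).card) := by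
          rw [h1]; ring
      _ = (-1:R) ^ (crossingPi A (I \ A) + crossingPi (J \ A) (I \ J)) *
          q ^ (A.card * (I \ A).card + (J \ A).card * (I \ J).card) := by rw [hpi', he']
      _ = (-1) ^ crossingPi (J \ A) (I \ J) * q ^ ((J \ A).card * (I \ J).card) *
          ((-1) ^ crossingPi A (I \ A) * q ^ (A.card * (I \ A).card)) := by ring
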